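/- arXiv:0705.2734 — 2 statements merged into one kernel-verified Lean document; each statement's English description precedes it below -/
import Mathlib

section
/- For all n ≥ 1 and k ≥ 1, Σ_{k≥1} k·D(n,k) = D(n+1) − n·D(n−1), where D(m) = Σ_k D(m,k). -/
noncomputable def partD (n k : ℕ) : ℕ :=
  Nat.card {P : Finpartition (Finset.univ : Finset (Fin n)) //
    P.parts.card = k ∧ ∀ b ∈ P.parts, 2 ≤ b.card}

noncomputable def partDtot (n : ℕ) : ℕ :=
  Nat.card {P : Finpartition (Finset.univ : Finset (Fin n)) //
    ∀ b ∈ P.parts, 2 ≤ b.card}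

/-!
Sort the partitions of `insert t s` (with `t ∉ s`, `#s = n`) by the part containing `t`. That
part is `insert t c` with `c ⊆ s`, and removing it leaves an arbitrary partition of `s \ c`.
Writing `D(u)` for the number of partitions of `u` without singleton parts, this gives
`D(n+1) = ∑_{c ⊆ s, #c ≥ 1} D(s \ c)`. Likewise a partition of `s` with a marked part `c` is a
partition of `s \ c` together with `c`, so `∑ k, k D(n,k) = ∑_{c ⊆ s, #c ≥ 2} D(s \ c)`. The
two sums differ by the `n` singletons `c`, each contributing `D(n-1)`.
-/

open Finset

theorem Finset.map_preimage_of_subset_map {α β : Type*} {f : α ↪ β} {s : Finset α}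
    {b : Finset β} (h : b ⊆ s.map f) : (b.preimage f f.injective.injOn).map f = b := by
  obtain ⟨u, -, rfl⟩ := subset_map_iff.1 h
  rw [preimage_map]

namespace Finpartition

section Embedding

variable {α β : Type*} [DecidableEq α] [DecidableEq β] {s : Finset α}

variable (s) in
def noSingletons : Finset (Finpartition s) := {P | ∀ b ∈ P.parts, 2 ≤ #b}

@[simp]
theorem mem_noSingletons {P : Finpartition s} :
    P ∈ noSingletons s ↔ ∀ b ∈ P.parts, 2 ≤ #b := by
  simp [noSingletons]

def mapEmbedding (f : α ↪ β) (P : Finpartition s) : Finpartition (s.map f) where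
  parts := P.parts.map (Finset.mapEmbedding f).toEmbedding
  supIndep := by
    rw [supIndep_iff_pairwiseDisjoint, coe_map]
    rintro _ ⟨a, ha, rfl⟩ _ ⟨b, hb, rfl⟩ hab
    simpa [Function.onFun] using P.disjoint ha hb (ne_of_apply_ne _ hab)
  sup_parts := by
    conv_rhs => rw [← P.sup_parts]
    ext x
    simp only [mem_sup, mem_map, RelEmbedding.coe_toEmbedding, mapEmbedding_apply, id]
    grind
  bot_notMem := by simp

noncomputable def comapEmbedding (f : α ↪ β) (Q : Finpartition (s.map f)) : Finpartition s where
  parts := Q.parts.image (·.preimage f f.injective.injOn)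
  supIndep := by
    rw [supIndep_iff_pairwiseDisjoint, coe_image]
    rintro _ ⟨a, ha, rfl⟩ _ ⟨b, hb, rfl⟩ hab
    exact disjoint_preimage (hs := f.injective.injOn) (ht := f.injective.injOn)
      (Q.disjoint ha hb fun h ↦ hab (h ▸ rfl))
  sup_parts := by
    ext x
    simp only [mem_sup, mem_image, id, exists_exists_and_eq_and, mem_preimage]
    exact ⟨fun ⟨b, hb, hx⟩ ↦ (mem_map' f).1 (Q.subset hb hx),
      fun hx ↦ Q.exists_mem (mem_map_of_mem f hx)⟩
  bot_notMem := by
    simp only [bot_eq_empty, mem_image]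
    rintro ⟨b, hb, hempty⟩
    rw [← map_preimage_of_subset_map (Q.subset hb), hempty] at hb
    exact Q.bot_notMem hb

noncomputable def mapEmbeddingEquiv (f : α ↪ β) (s : Finset α) :
    Finpartition s ≃ Finpartition (s.map f) where
  toFun := mapEmbedding f
  invFun := comapEmbedding f
  left_inv P := by
    ext b
    simp [mapEmbedding, comapEmbedding]
  right_inv Q := by
    ext b
    simp only [mapEmbedding, comapEmbedding, mem_map, mem_image, RelEmbedding.coe_toEmbedding,
      mapEmbedding_apply, exists_exists_and_eq_and]
    exact ⟨by rintro ⟨a, ha, rfl⟩; rwa [map_preimage_of_subset_map (Q.subset ha)],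
      fun hb ↦ ⟨b, hb, map_preimage_of_subset_map (Q.subset hb)⟩⟩

theorem mapEmbeddingEquiv_parts (f : α ↪ β) (P : Finpartition s) :
    (mapEmbeddingEquiv f s P).parts = P.parts.map (Finset.mapEmbedding f).toEmbedding := rfl

theorem noSingletons_map (f : α ↪ β) :
    noSingletons (s.map f) = (noSingletons s).map (mapEmbeddingEquiv f s).toEmbedding := by
  ext Q
  obtain ⟨P, rfl⟩ := (mapEmbeddingEquiv f s).surjective Q
  simp [mapEmbeddingEquiv_parts]

end Embedding

section Avoid

variable {α : Type*} [GeneralizedBooleanAlgebra α] [DecidableEq α] {u b : α}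

theorem parts_avoid_of_mem (P : Finpartition u) (hb : b ∈ P.parts) :
    (P.avoid b).parts = P.parts.erase b := by
  ext d
  rw [mem_avoid, mem_erase]
  constructor
  · rintro ⟨e, he, heb, rfl⟩
    have hne : e ≠ b := by rintro rfl; exact heb le_rfl
    have hdisj : Disjoint e b := P.disjoint he hb hne
    rw [sdiff_eq_left.2 hdisj]
    exact ⟨hne, he⟩
  · rintro ⟨hne, hd⟩
    have hdisj : Disjoint d b := P.disjoint hd hb hne
    exact ⟨d, hd, fun hle ↦ P.ne_bot hd (hdisj.eq_bot_of_le hle), sdiff_eq_left.2 hdisj⟩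

end Avoid

section Counting

variable {α : Type*} [DecidableEq α] {u b : Finset α}

theorem card_filter_mem_parts (hb : b ⊆ u) :
    #{P ∈ noSingletons u | b ∈ P.parts} = if 2 ≤ #b then #(noSingletons (u \ b)) else 0 := by
  split_ifs with hcard
  · have hne : b ≠ ⊥ := by rintro rfl; simp at hcard
    refine card_nbij' (fun P ↦ P.avoid b)
      (fun Q ↦ Q.extend hne disjoint_sdiff_self_left (sdiff_sup_cancel hb)) ?_ ?_ ?_ ?_
    · intro P hP
      rw [mem_coe, mem_filter, mem_noSingletons] at hP
      rw [mem_coe, mem_noSingletons, parts_avoid_of_mem _ hP.2]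
      exact fun c hc ↦ hP.1 c (mem_of_mem_erase hc)
    · intro Q hQ
      rw [mem_coe, mem_noSingletons] at hQ
      rw [mem_coe, mem_filter, mem_noSingletons, extend_parts]
      refine ⟨fun c hc ↦ ?_, mem_insert_self b _⟩
      rcases mem_insert.1 hc with rfl | hc
      exacts [hcard, hQ c hc]
    · intro P hP
      rw [mem_coe, mem_filter] at hP
      ext1
      rw [extend_parts, parts_avoid_of_mem _ hP.2, insert_erase hP.2]
    · intro Q hQ
      have hbQ : b ∉ Q.parts := fun h ↦
        hne (disjoint_self.1 (disjoint_sdiff_self_left.mono_left (Q.le h)))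
      ext1
      rw [parts_avoid_of_mem _ (by simp [extend_parts]), extend_parts, erase_insert hbQ]
  · rw [card_eq_zero, filter_eq_empty_iff]
    intro P hP hbP
    exact hcard ((mem_filter.1 hP).2 b hbP)

theorem erase_part_eq_iff_insert_mem_parts {t : α} {c : Finset α} (P : Finpartition u)
    (ht : t ∈ u) (htc : t ∉ c) : (P.part t).erase t = c ↔ insert t c ∈ P.parts := by
  constructor
  · rintro rfl
    rw [insert_erase (P.mem_part_self.2 ht)]
    exact P.part_mem.2 ht
  · intro h
    rw [P.part_eq_of_mem h (mem_insert_self t c), erase_insert htc]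

theorem sum_card_parts_eq_sum_powerset (s : Finset α) :
    ∑ Q ∈ noSingletons s, #Q.parts =
      ∑ c ∈ s.powerset, if 2 ≤ #c then #(noSingletons (s \ c)) else 0 := by
  calc ∑ Q ∈ noSingletons s, #Q.parts
      = ∑ Q ∈ noSingletons s, #(s.powerset.bipartiteAbove (fun Q c ↦ c ∈ Q.parts) Q) := by
        refine sum_congr rfl fun Q _ ↦ ?_
        rw [bipartiteAbove, filter_mem_eq_inter,
          inter_eq_right.2 fun c hc ↦ mem_powerset.2 (Q.le hc)]
    _ = ∑ c ∈ s.powerset, #((noSingletons s).bipartiteBelow (fun Q c ↦ c ∈ Q.parts) c) :=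
        sum_card_bipartiteAbove_eq_sum_card_bipartiteBelow _
    _ = _ := sum_congr rfl fun c hc ↦ card_filter_mem_parts (mem_powerset.1 hc)

theorem card_noSingletons_insert_eq_sum_powerset {s : Finset α} {t : α} (ht : t ∉ s) :
    #(noSingletons (insert t s)) =
      ∑ c ∈ s.powerset, if 2 ≤ #c + 1 then #(noSingletons (s \ c)) else 0 := by
  have hmaps : Set.MapsTo (fun P : Finpartition (insert t s) ↦ (P.part t).erase t)
      (noSingletons (insert t s)) s.powerset := by
    intro P _
    rw [mem_coe, mem_powerset]
    intro x hx
    obtain ⟨hxt, hxP⟩ := mem_erase.1 hx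
    exact (mem_insert.1 (P.part_subset t hxP)).resolve_left hxt
  rw [card_eq_sum_card_fiberwise hmaps]
  refine sum_congr rfl fun c hc ↦ ?_
  have hcs : c ⊆ s := mem_powerset.1 hc
  have htc : t ∉ c := fun h ↦ ht (hcs h)
  rw [filter_congr fun P _ ↦ erase_part_eq_iff_insert_mem_parts P (mem_insert_self t s) htc,
    card_filter_mem_parts (insert_subset_insert t hcs), card_insert_of_notMem htc,
    insert_sdiff_insert, sdiff_insert_of_notMem ht]

theorem card_noSingletons_insert {s : Finset α} {t : α} (ht : t ∉ s) :
    #(noSingletons (insert t s)) =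
      ∑ Q ∈ noSingletons s, #Q.parts + ∑ c ∈ s.powersetCard 1, #(noSingletons (s \ c)) := by
  rw [card_noSingletons_insert_eq_sum_powerset ht, sum_card_parts_eq_sum_powerset,
    powersetCard_eq_filter, sum_filter, ← sum_add_distrib]
  refine sum_congr rfl fun c _ ↦ ?_
  split_ifs <;> omega

theorem sum_card_parts_eq_sum_range {s : Finset α} (S : Finset (Finpartition s)) :
    ∑ P ∈ S, #P.parts = ∑ k ∈ range (#s + 1), k * #{P ∈ S | #P.parts = k} := by
  rw [← sum_fiberwise_of_maps_to (g := fun P ↦ #P.parts) (t := range (#s + 1))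
    fun P _ ↦ mem_range.2 (Nat.lt_succ_of_le P.card_parts_le_card)]
  refine sum_congr rfl fun k _ ↦ ?_
  rw [sum_congr rfl fun P hP ↦ (mem_filter.1 hP).2, sum_const, smul_eq_mul, mul_comm]

end Counting

end Finpartition

open Finpartition

theorem Finset.exists_map_univ_fin_eq {α : Type*} {s : Finset α} {m : ℕ} (hs : #s = m) :
    ∃ f : Fin m ↪ α, univ.map f = s :=
  ⟨(s.equivFinOfCardEq hs).symm.toEmbedding.trans (Function.Embedding.subtype _), by
    ext x
    simp only [mem_map, mem_univ, true_and, Function.Embedding.trans_apply,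
      Equiv.coe_toEmbedding, Function.Embedding.subtype_apply]
    exact ⟨fun ⟨a, ha⟩ ↦ ha ▸ ((s.equivFinOfCardEq hs).symm a).2,
      fun hx ↦ ⟨s.equivFinOfCardEq hs ⟨x, hx⟩, by simp⟩⟩⟩

section Transfer

variable {α : Type*} [DecidableEq α] {s : Finset α} {m : ℕ}

theorem card_noSingletons_eq_partDtot (hs : #s = m) : #(noSingletons s) = partDtot m := by
  obtain ⟨f, rfl⟩ := exists_map_univ_fin_eq hs
  rw [noSingletons_map, card_map, partDtot, Nat.card_eq_fintype_card, Fintype.card_subtype]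
  congr 1
  ext P
  simp

theorem card_filter_noSingletons_eq_partD (hs : #s = m) (k : ℕ) :
    #{P ∈ noSingletons s | #P.parts = k} = partD m k := by
  obtain ⟨f, rfl⟩ := exists_map_univ_fin_eq hs
  rw [noSingletons_map, filter_map, card_map, partD, Nat.card_eq_fintype_card,
    Fintype.card_subtype]
  congr 1
  ext P
  simp [mapEmbeddingEquiv_parts, and_comm]

end Transfer

theorem partDtot_succ (n : ℕ) :
    partDtot (n + 1) = ∑ k ∈ range (n + 1), k * partD n k + n * partDtot (n - 1) := by
  rw [← card_noSingletons_eq_partDtot (s := insert n (range n))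
      (by rw [card_insert_of_notMem notMem_range_self, card_range]),
    card_noSingletons_insert notMem_range_self, sum_card_parts_eq_sum_range, card_range]
  congr 1
  · exact sum_congr rfl fun k _ ↦ by rw [card_filter_noSingletons_eq_partD (card_range n)]
  · rw [sum_congr rfl fun c hc ↦ card_noSingletons_eq_partDtot (by
      rw [card_sdiff_of_subset (mem_powersetCard.1 hc).1, (mem_powersetCard.1 hc).2, card_range]),
      sum_const, card_powersetCard, card_range, Nat.choose_one_right, smul_eq_mul]

theorem sum_k_partD_general (n : ℕ) :
    (∑ k ∈ Finset.range (n + 1), k * partD n k : ℤ) =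
      (partDtot (n + 1) : ℤ) - n * partDtot (n - 1) := by
  rw [partDtot_succ]
  push_cast
  ring

theorem sum_k_partD (n : ℕ) (hn : 1 ≤ n) :
    (∑ k ∈ Finset.range (n + 1), k * partD n k : ℤ) =
      (partDtot (n + 1) : ℤ) - n * partDtot (n - 1) :=
  sum_k_partD_general n
end

section
/- The ratio D(n+1)/D(n) tends to infinity as n → ∞, where D(m) is the number of partitions of {1,...,m} with no singleton blocks; consequently D(n+1)/B(n) → 1. -/
noncomputable def bell (n : ℕ) : ℕ :=
  Nat.card (Finpartition (Finset.univ : Finset (Fin n)))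

/-!
Partitions are handled as setoids. Merging all singleton classes of a setoid on `α` with a new
point is a bijection from the setoids having a singleton class onto the singleton-free setoids on
`Option α`: the inverse splits the class of the new point into singletons. Hence
`B(n) = D(n) + D(n+1)`.

Inserting the new point into one of the classes of a singleton-free setoid is injective in the
pair (setoid, class), and at most `m ^ n` setoids on `n` points have at most `m` classes, so
`D(n+1) ≥ m (D(n) - m ^ n)`. Perfect matchings give `D(n) ≥ ⌊n/2⌋!`, which eventually exceeds
`2 m ^ n`; thus `D(n+1)/D(n) ≥ m/2` eventually, for every `m`. Finally
`D(n+1)/B(n) = 1/(1 + D(n)/D(n+1)) → 1`.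
-/

open Finset Filter Topology
open scoped Nat

variable {α β : Type*}

lemma Finite.nonempty_embedding_of_card_le [Finite α] [Finite β]
    (h : Nat.card α ≤ Nat.card β) : Nonempty (α ↪ β) := by
  have := Fintype.ofFinite α
  have := Fintype.ofFinite β
  exact Function.Embedding.nonempty_of_card_le (by simpa only [Nat.card_eq_fintype_card] using h)

namespace Setoid

def SingletonFree (s : Setoid α) : Prop :=
  ∀ a, ∃ b, b ≠ a ∧ s a b

instance [Finite α] : Finite (Setoid α) :=
  Finite.of_injective (fun s : Setoid α => s.r) fun _ _ h =>
    Setoid.ext fun a b => iff_of_eq (congrFun₂ h a b)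

lemma SingletonFree.comap {s : Setoid β} (hs : s.SingletonFree) {f : α → β}
    (hf : Function.Surjective f) : (s.comap f).SingletonFree := fun a => by
  obtain ⟨y, hy, hay⟩ := hs (f a)
  obtain ⟨b, rfl⟩ := hf y
  exact ⟨b, fun h => hy (h ▸ rfl), (comap_rel f s a b).2 hay⟩

def _root_.Equiv.setoidCongr (e : α ≃ β) : Setoid α ≃ Setoid β where
  toFun s := s.comap e.symm
  invFun t := t.comap e
  left_inv s := ext fun a b => by simp [comap_rel]
  right_inv t := ext fun a b => by simp [comap_rel]

lemma card_singletonFree_congr (e : α ≃ β) :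
    Nat.card {s : Setoid α // s.SingletonFree} = Nat.card {t : Setoid β // t.SingletonFree} :=
  Nat.card_congr <| e.setoidCongr.subtypeEquiv fun s =>
    ⟨fun hs => hs.comap e.symm.surjective,
      fun hs => e.setoidCongr.left_inv s ▸ hs.comap e.surjective⟩

end Setoid

namespace Finpartition

variable [DecidableEq α]

lemma mem_parts_iff_exists_part_eq {s t : Finset α} {P : Finpartition s} :
    t ∈ P.parts ↔ ∃ a ∈ s, P.part a = t :=
  ⟨fun ht => P.part_surjOn ht, fun ⟨_, ha, hat⟩ => hat ▸ P.part_mem.2 ha⟩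

lemma ext_part {s : Finset α} {P Q : Finpartition s} (h : ∀ a ∈ s, P.part a = Q.part a) :
    P = Q := by
  ext t
  simp only [mem_parts_iff_exists_part_eq]
  exact exists_congr fun a => and_congr_right fun ha => by rw [h a ha]

variable [Fintype α]

noncomputable def equivSetoid : Finpartition (univ : Finset α) ≃ Setoid α where
  toFun P := Setoid.ker P.part
  invFun s := by classical exact ofSetoid s
  left_inv P := by
    classical
    have hpart : ∀ a, (ofSetoid (Setoid.ker P.part)).part a = P.part a := fun a => by
      ext b
      rw [mem_part_ofSetoid_iff_rel, Setoid.ker_def,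
        P.mem_part_iff_part_eq_part (mem_univ b) (mem_univ a), eq_comm]
    exact ext_part fun a _ => hpart a
  right_inv s := by
    classical
    ext a b
    rw [Setoid.ker_def, eq_comm,
      ← (ofSetoid s).mem_part_iff_part_eq_part (mem_univ b) (mem_univ a)]
    exact mem_part_ofSetoid_iff_rel

lemma equivSetoid_apply (P : Finpartition (univ : Finset α)) (a b : α) :
    equivSetoid P a b ↔ P.part a = P.part b := Setoid.ker_def

lemma two_le_card_parts_iff_singletonFree (P : Finpartition (univ : Finset α)) :
    (∀ t ∈ P.parts, 2 ≤ t.card) ↔ (equivSetoid P).SingletonFree := by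
  simp only [Setoid.SingletonFree, equivSetoid_apply, mem_parts_iff_exists_part_eq, mem_univ,
    true_and, forall_exists_index, forall_apply_eq_imp_iff]
  refine forall_congr' fun a => ?_
  have hmem (b : α) : b ∈ P.part a ↔ P.part a = P.part b :=
    (P.mem_part_iff_part_eq_part (mem_univ b) (mem_univ a)).trans eq_comm
  constructor
  · intro h
    obtain ⟨b, hb, hba⟩ := exists_mem_ne h a
    exact ⟨b, hba, (hmem b).1 hb⟩
  · rintro ⟨b, hba, hab⟩
    exact one_lt_card.2 ⟨b, (hmem b).2 hab, a, P.mem_part (mem_univ a), hba⟩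

end Finpartition

namespace Setoid

section MergeSingletons

def IsSingleton (s : Setoid α) (a : α) : Prop :=
  ∀ b, s a b → b = a

lemma not_singletonFree_iff {s : Setoid α} : ¬ s.SingletonFree ↔ ∃ a, s.IsSingleton a := by
  simp only [SingletonFree, IsSingleton, not_forall, not_exists, not_and]
  exact exists_congr fun a => forall_congr' fun b => by tauto

open scoped Classical in
noncomputable def mergeSingletons (s : Setoid α) : Setoid (Option α) :=
  ker fun o => o.bind fun a => if s.IsSingleton a then none else some (Quotient.mk s a)

open scoped Classical in
noncomputable def splitNone (t : Setoid (Option α)) : Setoid α :=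
  ker fun a => if t (some a) none then Sum.inl a else Sum.inr (Quotient.mk t (some a))

variable {s : Setoid α} {t : Setoid (Option α)} {a b : α}

lemma IsSingleton.rel_iff (ha : s.IsSingleton a) : s a b ↔ b = a :=
  ⟨ha b, fun h => h ▸ s.refl a⟩

lemma mergeSingletons_some_none : s.mergeSingletons (some a) none ↔ s.IsSingleton a := by
  rw [mergeSingletons, ker_def]
  by_cases ha : s.IsSingleton a <;> simp [ha]

lemma mergeSingletons_some_some :
    s.mergeSingletons (some a) (some b) ↔ s.IsSingleton a ∧ s.IsSingleton b ∨ s a b := by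
  rw [mergeSingletons, ker_def]
  by_cases ha : s.IsSingleton a <;> by_cases hb : s.IsSingleton b <;>
    simp [ha, hb, Quotient.eq]
  · exact fun h => hb (ha b h ▸ ha)
  · exact fun h => ha (hb a (s.symm' h) ▸ hb)

lemma splitNone_iff : t.splitNone a b ↔ a = b ∨ ¬ t (some a) none ∧ t (some a) (some b) := by
  rw [splitNone, ker_def]
  by_cases ha : t (some a) none <;> by_cases hb : t (some b) none <;>
    simp [ha, hb, Quotient.eq]
  · rintro rfl
    exact hb ha
  · exact ⟨by rintro rfl; exact ha hb, fun h => ha (t.trans' h hb)⟩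
  · rintro rfl
    exact t.refl' _

lemma splitNone_mergeSingletons (s : Setoid α) : s.mergeSingletons.splitNone = s := by
  ext a b
  rw [splitNone_iff, mergeSingletons_some_none, mergeSingletons_some_some]
  by_cases ha : s.IsSingleton a
  · simp [ha, ha.rel_iff, eq_comm]
  · simpa [ha] using fun hab : a = b => hab ▸ s.refl' a

lemma isSingleton_splitNone_iff (ht : t.SingletonFree) :
    t.splitNone.IsSingleton a ↔ t (some a) none := by
  constructor
  · intro ha
    by_contra hna
    obtain ⟨_ | c, hne, hac⟩ := ht (some a)
    · exact hna hac
    · exact hne (congrArg some (ha c (splitNone_iff.2 (Or.inr ⟨hna, hac⟩))))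
  · intro hna b hab
    rcases splitNone_iff.1 hab with rfl | ⟨hn, -⟩
    · rfl
    · exact absurd hna hn

lemma mergeSingletons_splitNone (ht : t.SingletonFree) : t.splitNone.mergeSingletons = t := by
  ext o o'
  rcases o with _ | a <;> rcases o' with _ | b
  · exact iff_of_true (refl' _ _) (refl' _ _)
  · rw [comm', mergeSingletons_some_none, isSingleton_splitNone_iff ht, t.comm']
  · rw [mergeSingletons_some_none, isSingleton_splitNone_iff ht]
  · rw [mergeSingletons_some_some, isSingleton_splitNone_iff ht, isSingleton_splitNone_iff ht,
      splitNone_iff]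
    constructor
    · rintro (⟨ha, hb⟩ | rfl | ⟨-, h⟩)
      · exact t.trans' ha (t.symm' hb)
      · exact t.refl' _
      · exact h
    · intro h
      by_cases ha : t (some a) none
      · exact Or.inl ⟨ha, t.trans' (t.symm' h) ha⟩
      · exact Or.inr (Or.inr ⟨ha, h⟩)

lemma singletonFree_mergeSingletons (hs : ∃ a, s.IsSingleton a) :
    s.mergeSingletons.SingletonFree := by
  rintro (_ | a)
  · obtain ⟨a, ha⟩ := hs
    exact ⟨some a, Option.some_ne_none a, (comm' _).1 (mergeSingletons_some_none.2 ha)⟩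
  · by_cases ha : s.IsSingleton a
    · exact ⟨none, (Option.some_ne_none a).symm, mergeSingletons_some_none.2 ha⟩
    · simp only [IsSingleton, not_forall] at ha
      obtain ⟨b, hab, hba⟩ := ha
      exact ⟨some b, by simpa using hba, mergeSingletons_some_some.2 (Or.inr hab)⟩

lemma exists_isSingleton_splitNone (ht : t.SingletonFree) : ∃ a, t.splitNone.IsSingleton a := by
  obtain ⟨_ | a, hne, h⟩ := ht none
  · exact absurd rfl hne
  · exact ⟨a, (isSingleton_splitNone_iff ht).2 (t.symm' h)⟩

noncomputable def mergeSingletonsEquiv :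
    {s : Setoid α // ¬ s.SingletonFree} ≃ {t : Setoid (Option α) // t.SingletonFree} where
  toFun s := ⟨s.1.mergeSingletons, singletonFree_mergeSingletons (not_singletonFree_iff.1 s.2)⟩
  invFun t := ⟨t.1.splitNone, not_singletonFree_iff.2 (exists_isSingleton_splitNone t.2)⟩
  left_inv s := Subtype.ext (splitNone_mergeSingletons s.1)
  right_inv t := Subtype.ext (mergeSingletons_splitNone t.2)

lemma card_eq_card_singletonFree_add [Finite α] :
    Nat.card (Setoid α) =
      Nat.card {s : Setoid α // s.SingletonFree} +
        Nat.card {t : Setoid (Option α) // t.SingletonFree} := by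
  classical
  rw [← Nat.card_congr mergeSingletonsEquiv, ← Nat.card_sum]
  exact Nat.card_congr (Equiv.sumCompl _).symm

end MergeSingletons

section InsertNone

def insertNone (s : Setoid α) (c : Quotient s) : Setoid (Option α) :=
  ker fun o => o.elim c (Quotient.mk s)

variable {s : Setoid α} {c : Quotient s} {a b : α}

lemma insertNone_some_some : s.insertNone c (some a) (some b) ↔ s a b := by
  rw [insertNone, ker_def]
  exact Quotient.eq

lemma insertNone_none_some : s.insertNone c none (some a) ↔ c = Quotient.mk s a := by
  rw [insertNone, ker_def]
  rfl

lemma singletonFree_insertNone (hs : s.SingletonFree) (c : Quotient s) :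
    (s.insertNone c).SingletonFree := by
  rintro (_ | a)
  · induction c using Quotient.inductionOn with | h a =>
    exact ⟨some a, Option.some_ne_none a, insertNone_none_some.2 rfl⟩
  · obtain ⟨b, hba, hab⟩ := hs a
    exact ⟨some b, by simpa using hba, insertNone_some_some.2 hab⟩

lemma insertNone_injective :
    Function.Injective fun p : Σ s : Setoid α, Quotient s => p.1.insertNone p.2 := by
  rintro ⟨s, c⟩ ⟨s', c'⟩ h
  dsimp only at h
  obtain rfl : s = s' := ext fun a b => by
    rw [← insertNone_some_some (c := c), h, insertNone_some_some]
  induction c using Quotient.inductionOn with | h a =>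
  have hc' : c' = Quotient.mk s a := insertNone_none_some.1 (h ▸ insertNone_none_some.2 rfl)
  rw [hc']

lemma card_singletonFree_card_quotient_ge_mul_le [Finite α] (m : ℕ) :
    Nat.card {s : Setoid α // s.SingletonFree ∧ m ≤ Nat.card (Quotient s)} * m ≤
      Nat.card {t : Setoid (Option α) // t.SingletonFree} := by
  have e (s : {s : Setoid α // s.SingletonFree ∧ m ≤ Nat.card (Quotient s)}) :
      Fin m ↪ Quotient s.1 :=
    (Finite.nonempty_embedding_of_card_le (by simpa using s.2.2)).some
  let f (p : {s : Setoid α // s.SingletonFree ∧ m ≤ Nat.card (Quotient s)} × Fin m) :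
      {t : Setoid (Option α) // t.SingletonFree} :=
    ⟨p.1.1.insertNone (e p.1 p.2), singletonFree_insertNone p.1.2.1 _⟩
  have hf : Function.Injective f := by
    rintro ⟨s, j⟩ ⟨s', j'⟩ h
    obtain ⟨hs, hj⟩ := Sigma.mk.inj_iff.1 <|
      @insertNone_injective _ ⟨s.1, e s j⟩ ⟨s'.1, e s' j'⟩ (congrArg Subtype.val h)
    obtain rfl : s = s' := Subtype.ext hs
    rw [(e s).injective (eq_of_heq hj)]
  simpa [Nat.card_prod] using Nat.card_le_card_of_injective f hf

lemma ker_comp_mk_of_injective {β : Type*} {s : Setoid α} {f : Quotient s → β}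
    (hf : Function.Injective f) : ker (f ∘ Quotient.mk s) = s :=
  ext fun _ _ => ker_def.trans (hf.eq_iff.trans Quotient.eq)

lemma card_setoid_card_quotient_le [Finite α] (m : ℕ) :
    Nat.card {s : Setoid α // Nat.card (Quotient s) ≤ m} ≤ m ^ Nat.card α := by
  have e (s : {s : Setoid α // Nat.card (Quotient s) ≤ m}) : Quotient s.1 ↪ Fin m :=
    (Finite.nonempty_embedding_of_card_le (by simpa using s.2)).some
  have hf : Function.Injective fun s => e s ∘ Quotient.mk s.1 := by
    intro s s' (h : e s ∘ Quotient.mk s.1 = e s' ∘ Quotient.mk s'.1)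
    refine Subtype.ext ?_
    rw [← ker_comp_mk_of_injective (e s).injective, h,
      ker_comp_mk_of_injective (e s').injective]
  simpa [Nat.card_fun] using Nat.card_le_card_of_injective _ hf

lemma card_singletonFree_le [Finite α] (m : ℕ) :
    Nat.card {s : Setoid α // s.SingletonFree} ≤
      Nat.card {s : Setoid α // s.SingletonFree ∧ m ≤ Nat.card (Quotient s)} +
        m ^ Nat.card α := by
  calc Nat.card {s : Setoid α // s.SingletonFree}
      = {s : Setoid α | s.SingletonFree}.ncard := Nat.card_coe_set_eq _
    _ ≤ ({s : Setoid α | s.SingletonFree ∧ m ≤ Nat.card (Quotient s)} ∪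
          {s | Nat.card (Quotient s) ≤ m}).ncard :=
        Set.ncard_le_ncard (fun s hs => (le_total m _).imp (⟨hs, ·⟩) id) (Set.toFinite _)
    _ ≤ _ := Set.ncard_union_le _ _
    _ ≤ _ := Nat.add_le_add (Nat.card_coe_set_eq _).ge
        ((Nat.card_coe_set_eq {s : Setoid α | _}).symm.trans_le (card_setoid_card_quotient_le m))

lemma card_singletonFree_sub_pow_mul_le [Finite α] (m : ℕ) :
    (Nat.card {s : Setoid α // s.SingletonFree} - m ^ Nat.card α) * m ≤
      Nat.card {t : Setoid (Option α) // t.SingletonFree} :=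
  (Nat.mul_le_mul_right m (Nat.sub_le_iff_le_add.2 (card_singletonFree_le m))).trans
    (card_singletonFree_card_quotient_ge_mul_le m)

end InsertNone

section Matching

variable {n k : ℕ}

/-- The classes of `ker (matchingKey hk σ)` are the pairs `{i, k + σ i}` for `i < k`, the points
from `2 * k` on joining the class of their residue mod `k`. -/
def matchingKey (hk : 0 < k) (σ : Equiv.Perm (Fin k)) (x : Fin n) : Fin k :=
  if h : x.1 < k then σ ⟨x, h⟩ else ⟨x % k, Nat.mod_lt _ hk⟩

lemma matchingKey_of_lt (hk : 0 < k) (σ : Equiv.Perm (Fin k)) {x : Fin n} (h : x.1 < k) :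
    matchingKey hk σ x = σ ⟨x, h⟩ :=
  dif_pos h

lemma matchingKey_of_ge (hk : 0 < k) (σ : Equiv.Perm (Fin k)) {x : Fin n} (h : k ≤ x.1) :
    matchingKey hk σ x = ⟨x % k, Nat.mod_lt _ hk⟩ :=
  dif_neg h.not_gt

lemma matchingKey_add (hk : 0 < k) (hkn : 2 * k ≤ n) (σ : Equiv.Perm (Fin k)) (j : Fin k) :
    matchingKey hk σ (⟨k + j, by omega⟩ : Fin n) = j := by
  rw [matchingKey_of_ge hk σ (Nat.le_add_right k j)]
  ext
  simp [Nat.mod_eq_of_lt j.is_lt]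

lemma matchingKey_val (hk : 0 < k) (σ : Equiv.Perm (Fin k)) (i : Fin k) (h : i.1 < n) :
    matchingKey hk σ (⟨i, h⟩ : Fin n) = σ i :=
  matchingKey_of_lt hk σ i.is_lt

lemma singletonFree_ker_matchingKey (hk : 0 < k) (hkn : 2 * k ≤ n) (σ : Equiv.Perm (Fin k)) :
    (ker (matchingKey (n := n) hk σ)).SingletonFree := by
  intro x
  by_cases hx : x.1 < k
  · refine ⟨⟨k + σ ⟨x, hx⟩, by omega⟩, fun h => ?_, ?_⟩
    · have := congrArg Fin.val h
      simp only at this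
      omega
    · rw [ker_def, matchingKey_add hk hkn, matchingKey_of_lt hk σ hx]
  · refine ⟨⟨σ.symm ⟨x % k, Nat.mod_lt _ hk⟩, by omega⟩, fun h => ?_, ?_⟩
    · have := congrArg Fin.val h
      simp only at this
      omega
    · rw [ker_def, matchingKey_val, Equiv.apply_symm_apply, matchingKey_of_ge hk σ (not_lt.1 hx)]

lemma ker_matchingKey_injective (hk : 0 < k) (hkn : 2 * k ≤ n) :
    Function.Injective fun σ : Equiv.Perm (Fin k) => ker (matchingKey (n := n) hk σ) := by
  intro σ τ (h : ker _ = ker _)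
  ext i
  have hrel : ker (matchingKey (n := n) hk σ) ⟨i, by omega⟩ ⟨k + σ i, by omega⟩ := by
    rw [ker_def, matchingKey_add hk hkn, matchingKey_val]
  rw [h, ker_def, matchingKey_add hk hkn, matchingKey_val] at hrel
  rw [hrel]

lemma factorial_le_card_singletonFree (hk : 0 < k) (hkn : 2 * k ≤ n) :
    k ! ≤ Nat.card {s : Setoid (Fin n) // s.SingletonFree} := by
  have hinj : Function.Injective fun σ : Equiv.Perm (Fin k) =>
      (⟨ker (matchingKey hk σ), singletonFree_ker_matchingKey hk hkn σ⟩ :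
        {s : Setoid (Fin n) // s.SingletonFree}) :=
    fun σ τ h => ker_matchingKey_injective hk hkn (congrArg Subtype.val h)
  simpa [Fintype.card_perm] using Nat.card_le_card_of_injective _ hinj

end Matching

end Setoid

lemma partDtot_eq_card_singletonFree (n : ℕ) :
    partDtot n = Nat.card {s : Setoid (Fin n) // s.SingletonFree} :=
  Nat.card_congr (Finpartition.equivSetoid.subtypeEquiv
    Finpartition.two_le_card_parts_iff_singletonFree)

lemma partDtot_succ_eq_card_singletonFree_option (n : ℕ) :
    partDtot (n + 1) = Nat.card {t : Setoid (Option (Fin n)) // t.SingletonFree} :=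
  (partDtot_eq_card_singletonFree _).trans (Setoid.card_singletonFree_congr (finSuccEquiv n))

lemma bell_eq_partDtot_add (n : ℕ) : bell n = partDtot n + partDtot (n + 1) := by
  rw [bell, Nat.card_congr Finpartition.equivSetoid, Setoid.card_eq_card_singletonFree_add,
    partDtot_eq_card_singletonFree, partDtot_succ_eq_card_singletonFree_option]

lemma partDtot_sub_pow_mul_le (m n : ℕ) : (partDtot n - m ^ n) * m ≤ partDtot (n + 1) := by
  rw [partDtot_succ_eq_card_singletonFree_option, partDtot_eq_card_singletonFree]
  simpa using Setoid.card_singletonFree_sub_pow_mul_le (α := Fin n) m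

lemma factorial_le_partDtot {n : ℕ} (hn : 2 ≤ n) : (n / 2)! ≤ partDtot n := by
  rw [partDtot_eq_card_singletonFree]
  exact Setoid.factorial_le_card_singletonFree (by omega) (by omega)

lemma eventually_two_mul_pow_le_factorial_div_two (m : ℕ) :
    ∀ᶠ n in atTop, 2 * m ^ n ≤ (n / 2)! := by
  let c : ℝ := m + 1
  have hc : 1 ≤ c := by simp [c]
  have hsmall : Tendsto (fun k : ℕ => 2 * c * ((c ^ 2) ^ k / k !)) atTop (𝓝 0) := by
    simpa using (FloorSemiring.tendsto_pow_div_factorial_atTop (c ^ 2)).const_mul (2 * c)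
  have hhalf : Tendsto (fun n : ℕ => n / 2) atTop atTop := Nat.tendsto_div_const_atTop two_ne_zero
  filter_upwards [hhalf.eventually (hsmall.eventually_lt_const one_pos)] with n hn
  have hfac : (0 : ℝ) < (n / 2)! := by positivity
  rw [mul_div_assoc', div_lt_one hfac] at hn
  have hpow : (m : ℝ) ^ n ≤ c * (c ^ 2) ^ (n / 2) := by
    calc (m : ℝ) ^ n ≤ c ^ n := by gcongr; simp [c]
      _ ≤ c ^ (2 * (n / 2) + 1) := pow_le_pow_right₀ hc (by omega)
      _ = c * (c ^ 2) ^ (n / 2) := by rw [pow_succ, pow_mul, mul_comm]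
  exact_mod_cast (show (2 * m ^ n : ℝ) ≤ (n / 2)! by nlinarith)

lemma tendsto_succ_div_atTop {D : ℕ → ℕ} (hstep : ∀ m n, (D n - m ^ n) * m ≤ D (n + 1))
    (hgrowth : ∀ m : ℕ, ∀ᶠ n in atTop, 2 * m ^ n ≤ D n) :
    Tendsto (fun n => (D (n + 1) : ℝ) / D n) atTop atTop := by
  refine tendsto_atTop.2 fun M => ?_
  obtain ⟨m, hm⟩ := exists_nat_ge (2 * M)
  filter_upwards [hgrowth (m + 1)] with n hn
  have hpos : 0 < D n := lt_of_lt_of_le (by positivity) hn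
  have hD : D n * (m + 1) ≤ 2 * D (n + 1) := by
    have hhalf : D n ≤ 2 * (D n - (m + 1) ^ n) := by omega
    calc D n * (m + 1) ≤ 2 * (D n - (m + 1) ^ n) * (m + 1) := Nat.mul_le_mul_right _ hhalf
      _ = 2 * ((D n - (m + 1) ^ n) * (m + 1)) := by ring
      _ ≤ 2 * D (n + 1) := Nat.mul_le_mul_left 2 (hstep _ _)
  rw [le_div_iff₀ (by exact_mod_cast hpos)]
  have : ((D n * (m + 1) : ℕ) : ℝ) ≤ ((2 * D (n + 1) : ℕ) : ℝ) := by exact_mod_cast hD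
  push_cast at this
  nlinarith

lemma tendsto_succ_div_add_nhds_one {u : ℕ → ℝ}
    (h : Tendsto (fun n => u (n + 1) / u n) atTop atTop) :
    Tendsto (fun n => u (n + 1) / (u n + u (n + 1))) atTop (𝓝 1) := by
  have hinv : Tendsto (fun n => u n / u (n + 1) + 1) atTop (𝓝 (0 + 1)) := by
    simpa only [Pi.inv_apply, inv_div] using h.inv_tendsto_atTop.add_const 1
  have hlim := hinv.inv₀ (by norm_num)
  rw [zero_add, inv_one] at hlim
  refine hlim.congr' ?_
  filter_upwards [h.eventually_gt_atTop 0] with n hn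
  have : u (n + 1) ≠ 0 := fun h0 => by simp [h0] at hn
  field_simp

theorem partDtot_ratio_tendsto :
    Filter.Tendsto (fun n => (partDtot (n + 1) : ℝ) / partDtot n)
        Filter.atTop Filter.atTop ∧
    Filter.Tendsto (fun n => (partDtot (n + 1) : ℝ) / bell n)
        Filter.atTop (nhds 1) := by
  have hratio := tendsto_succ_div_atTop partDtot_sub_pow_mul_le fun m =>
    (eventually_two_mul_pow_le_factorial_div_two m).mp <|
      (eventually_ge_atTop 2).mono fun _ hn h => h.trans (factorial_le_partDtot hn)
  refine ⟨hratio, ?_⟩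
  simpa only [bell_eq_partDtot_add, Nat.cast_add] using
    tendsto_succ_div_add_nhds_one (u := fun n => (partDtot n : ℝ)) hratio
end
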